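/- With G(u,d) = D_KL(π_{(h(u,d),d)}‖π) as above, for u in the interior of the mean range, ∂G/∂u = h(u,d) − b''(0)·(d/2)·Cov_{π_{(h(u,d),d)}}(X, X²) / Var_{π_{(h(u,d),d)}}(X). -/

import Mathlib

open MeasureTheory ProbabilityTheory

/-- Log-normalizer `c_π(γ,d) = log ∫ exp(γx - c(d/2)x²) dπ(x)` (as a function of `γ`). -/
noncomputable def cpi (pi0 : Measure ℝ) (c d : ℝ) (γ : ℝ) : ℝ :=
  Real.log (∫ x, Real.exp (γ * x - c * (d / 2) * x ^ 2) ∂pi0)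

/-- The normalized quadratic tilt `dπ_{(γ,d)}/dπ(x) = exp(γx - c(d/2)x² - c_π(γ,d))`. -/
noncomputable def tiltG (pi0 : Measure ℝ) (c d : ℝ) (γ : ℝ) : Measure ℝ :=
  pi0.withDensity (fun x => ENNReal.ofReal
    (Real.exp (γ * x - c * (d / 2) * x ^ 2 - cpi pi0 c d γ)))

/-- Kullback–Leibler divergence `∫ log(dP/dQ) dP` (real-valued). -/
noncomputable def klReal {α : Type*} [MeasurableSpace α] (P Q : Measure α) : ℝ :=
  ∫ x, Real.log ((P.rnDeriv Q x).toReal) ∂P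

open Real Filter Topology

/-!
Let `ν` be the tilt of `π` by `x ↦ -c(d/2)x²`. Then `π_{(γ,d)}` is the tilt of `ν` by `x ↦ γx`
and `c_π(·,d)` is the cumulant generating function of `ν` up to a constant, so `∂_γ c_π(γ,d)` is
the tilted mean `m(γ)`, with `m' = Var > 0`. Hence `h` is the inverse of the strictly increasing
`m` near `u` and `h' = 1/Var`. As `log dπ_{(γ,d)}/dπ = γx - c(d/2)x² - c_π(γ,d)`, on `U`
`G(u) = h(u)·u - c(d/2)·E_{h(u)}[X²] - c_π(h(u),d)`; differentiating, the two terms `±h'(u)·u`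
cancel since `∂_γ c_π(h(u),d) = u`, and `∂_γ E_γ[X²] = Cov_γ(X, X²)` gives the claim.
-/

namespace ProbabilityTheory

variable {Ω : Type*} {mΩ : MeasurableSpace Ω} {μ : Measure Ω} {X : Ω → ℝ} {t : ℝ}

lemma hasDerivAt_cgf (ht : t ∈ interior (integrableExpSet X μ)) :
    HasDerivAt (cgf X μ) (μ.tilted (t * X ·))[X] t := by
  rw [integral_tilted_mul_self ht]
  exact (analyticAt_cgf ht).differentiableAt.hasDerivAt

lemma hasDerivAt_integral_tilted_mul_self (ht : t ∈ interior (integrableExpSet X μ)) :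
    HasDerivAt (fun s ↦ (μ.tilted (s * X ·))[X]) Var[X; μ.tilted (t * X ·)] t := by
  have h_eq : (fun s ↦ (μ.tilted (s * X ·))[X]) =ᶠ[𝓝 t] deriv (cgf X μ) := by
    filter_upwards [isOpen_interior.mem_nhds ht] with s hs using integral_tilted_mul_self hs
  rw [h_eq.hasDerivAt_iff, variance_tilted_mul ht, iteratedDeriv_succ, iteratedDeriv_one]
  exact (analyticAt_cgf ht).deriv.differentiableAt.hasDerivAt

lemma integral_pow_tilted_mul (n : ℕ) (s : ℝ) :
    (μ.tilted (s * X ·))[fun ω ↦ X ω ^ n] = μ[fun ω ↦ X ω ^ n * exp (s * X ω)] / mgf X μ s := by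
  rw [integral_tilted_mul_eq_mgf, ← integral_div]
  congr with ω
  rw [smul_eq_mul]
  ring

lemma hasDerivAt_integral_pow_tilted_mul [NeZero μ] (ht : t ∈ interior (integrableExpSet X μ))
    (n : ℕ) :
    HasDerivAt (fun s ↦ (μ.tilted (s * X ·))[fun ω ↦ X ω ^ n])
      ((μ.tilted (t * X ·))[fun ω ↦ X ω * X ω ^ n]
        - (μ.tilted (t * X ·))[X] * (μ.tilted (t * X ·))[fun ω ↦ X ω ^ n]) t := by
  have hmgf : mgf X μ t ≠ 0 :=
    (mgf_pos' (NeZero.ne μ) (interior_subset (s := integrableExpSet X μ) ht)).ne'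
  have h_mean : (μ.tilted (t * X ·))[X] = μ[fun ω ↦ X ω * exp (t * X ω)] / mgf X μ t := by
    simpa using integral_pow_tilted_mul (μ := μ) 1 t
  simp_rw [funext (integral_pow_tilted_mul (μ := μ) (X := X) n), ← pow_succ',
    integral_pow_tilted_mul, h_mean]
  refine ((hasDerivAt_integral_pow_mul_exp_real ht n).div (hasDerivAt_mgf ht) hmgf).congr_deriv ?_
  field_simp

lemma variance_pos_of_absolutelyContinuous {P : Measure Ω} [IsFiniteMeasure P] (hμP : μ ≪ P)
    (hX : MemLp X 2 P) (hX_const : ∀ m, ¬ ∀ᵐ ω ∂μ, X ω = m) : 0 < Var[X; P] :=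
  (variance_nonneg X P).lt_of_ne' fun h0 ↦
    hX_const _ (hμP.ae_le (ae_eq_integral_of_variance_eq_zero hX h0))

end ProbabilityTheory

section

variable {α : Type*} {mα : MeasurableSpace α} {μ : Measure α} {f : α → ℝ}

lemma klReal_tilted_self [SigmaFinite μ] [NeZero μ] (hf : Integrable (fun x ↦ exp (f x)) μ)
    (hf_int : Integrable f (μ.tilted f)) :
    klReal (μ.tilted f) μ = (μ.tilted f)[f] - log (∫ x, exp (f x) ∂μ) := by
  have := isProbabilityMeasure_tilted hf
  rw [klReal, integral_congr_ae
    ((tilted_absolutelyContinuous μ f).ae_le (log_rnDeriv_tilted_left_self hf)),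
    integral_sub hf_int (integrable_const _), integral_const, probReal_univ, one_smul]

lemma Continuous.integrable_of_measure_compl_eq_zero [TopologicalSpace α]
    [OpensMeasurableSpace α] [T2Space α] [IsFiniteMeasureOnCompacts μ] {K : Set α}
    (hK : IsCompact K) (hμK : μ Kᶜ = 0) {g : α → ℝ} (hg : Continuous g) : Integrable g μ := by
  have hK_ae : ∀ᵐ x ∂μ, x ∈ K :=
    (measure_eq_zero_iff_ae_notMem.mp hμK).mono fun _ hx ↦ by simpa using hx
  rw [← Measure.restrict_eq_self_of_ae_mem hK_ae]
  exact hg.continuousOn.integrableOn_compact hK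

lemma not_ae_eq_const_of_measure_pos_of_lt_one [IsProbabilityMeasure μ]
    (hs : ∃ s, MeasurableSet s ∧ 0 < μ s ∧ μ s < 1) (m : α) : ¬ ∀ᵐ x ∂μ, x = m := by
  intro hm
  obtain ⟨s, hs_meas, hs_pos, hs_lt⟩ := hs
  by_cases hms : m ∈ s
  · have : μ sᶜ = 0 := measure_eq_zero_iff_ae_notMem.mpr (hm.mono fun x hx ↦ by simpa [hx])
    exact hs_lt.ne ((prob_compl_eq_zero_iff hs_meas).mp this)
  · exact hs_pos.ne' (measure_eq_zero_iff_ae_notMem.mpr (hm.mono fun x hx ↦ hx ▸ hms))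

end

lemma continuousAt_of_leftInverse_of_strictMono {m h : ℝ → ℝ} {U : Set ℝ} (hU : IsOpen U)
    (hm : StrictMono m) (hinv : ∀ v ∈ U, m (h v) = v) {u : ℝ} (hu : u ∈ U)
    (hm_cont : ContinuousAt m (h u)) : ContinuousAt h u := by
  refine continuousAt_of_monotoneOn_of_image_mem_nhds (s := U) ?_ (hU.mem_nhds hu) ?_
  · intro v hv w hw hvw
    rwa [← hm.le_iff_le, hinv v hv, hinv w hw]
  · have : m ⁻¹' U ∈ 𝓝 (h u) := hm_cont.preimage_mem_nhds (by rw [hinv u hu]; exact hU.mem_nhds hu)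
    filter_upwards [this] with γ hγ
    exact ⟨m γ, hγ, hm.injective (hinv _ hγ)⟩

lemma HasDerivAt.of_leftInverse_of_strictMono {m h : ℝ → ℝ} {m' : ℝ} {U : Set ℝ} (hU : IsOpen U)
    (hm : StrictMono m) (hinv : ∀ v ∈ U, m (h v) = v) {u : ℝ} (hu : u ∈ U)
    (hm' : HasDerivAt m m' (h u)) (hm'0 : m' ≠ 0) : HasDerivAt h m'⁻¹ u :=
  hm'.of_local_left_inverse
    (continuousAt_of_leftInverse_of_strictMono hU hm hinv hu hm'.continuousAt) hm'0
    (eventually_of_mem (hU.mem_nhds hu) hinv)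

lemma mem_interior_integrableExpSet_tilted {pi0 : Measure ℝ}
    (hsupp : pi0 (Set.Icc (-1 : ℝ) 1)ᶜ = 0) (f : ℝ → ℝ) (γ : ℝ) :
    γ ∈ interior (integrableExpSet (fun x ↦ x) (pi0.tilted f)) := by
  suffices integrableExpSet (fun x ↦ x) (pi0.tilted f) = Set.univ by simp [this]
  ext t
  simp only [integrableExpSet, Set.mem_ofPred_eq, Set.mem_univ, iff_true]
  exact (by fun_prop : Continuous fun x ↦ exp (t * x)).integrable_of_measure_compl_eq_zero
    isCompact_Icc (tilted_absolutelyContinuous _ _ hsupp)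

-- `quadTilt π (c * (d / 2))` is the paper's `π_{(0,d)}`, and `π_{(γ,d)}` is its tilt by `γx`.
noncomputable def quadTilt (μ : Measure ℝ) (a : ℝ) : Measure ℝ := μ.tilted fun x ↦ -(a * x ^ 2)

section

variable {pi0 : Measure ℝ} [IsProbabilityMeasure pi0] (hsupp : pi0 (Set.Icc (-1 : ℝ) 1)ᶜ = 0)
include hsupp

lemma integrable_exp_quadratic (γ a : ℝ) :
    Integrable (fun x ↦ exp (γ * x - a * x ^ 2)) pi0 :=
  Continuous.integrable_of_measure_compl_eq_zero isCompact_Icc hsupp (by fun_prop)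

lemma tiltG_eq_tilted (c d γ : ℝ) :
    tiltG pi0 c d γ = pi0.tilted fun x ↦ γ * x - c * (d / 2) * x ^ 2 := by
  have hZ := integral_exp_pos (integrable_exp_quadratic hsupp γ (c * (d / 2)))
  rw [tiltG, Measure.tilted, cpi]
  congr 1
  funext x
  rw [Real.exp_sub, exp_log hZ]

lemma tilted_quadTilt (a γ : ℝ) :
    (quadTilt pi0 a).tilted (γ * ·) = pi0.tilted fun x ↦ γ * x - a * x ^ 2 := by
  rw [quadTilt, tilted_tilted (by simpa using integrable_exp_quadratic hsupp 0 a)]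
  congr 1
  funext x
  simp only [Pi.add_apply]
  ring

lemma tiltG_eq_tilted_quadTilt (c d γ : ℝ) :
    tiltG pi0 c d γ = (quadTilt pi0 (c * (d / 2))).tilted (γ * ·) := by
  rw [tiltG_eq_tilted hsupp, tilted_quadTilt hsupp]

lemma cpi_eq_cgf_add (c d γ : ℝ) :
    cpi pi0 c d γ = cgf (fun x ↦ x) (quadTilt pi0 (c * (d / 2))) γ
      + log (∫ x, exp (-(c * (d / 2) * x ^ 2)) ∂pi0) := by
  have hZ₀ := integral_exp_pos (by simpa using integrable_exp_quadratic hsupp 0 (c * (d / 2)))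
  have hZ := integral_exp_pos (integrable_exp_quadratic hsupp γ (c * (d / 2)))
  simp only [cgf, mgf, quadTilt, integral_exp_tilted, Pi.add_apply, neg_add_eq_sub]
  rw [log_div hZ.ne' hZ₀.ne', sub_add_cancel, cpi]

lemma hasDerivAt_cpi (c d γ : ℝ) :
    HasDerivAt (cpi pi0 c d) (tiltG pi0 c d γ)[fun x ↦ x] γ := by
  rw [funext (cpi_eq_cgf_add hsupp c d), tiltG_eq_tilted_quadTilt hsupp]
  exact (hasDerivAt_cgf (mem_interior_integrableExpSet_tilted hsupp _ γ)).add_const _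

lemma hasDerivAt_integral_id_tiltG (c d γ : ℝ) :
    HasDerivAt (fun γ ↦ (tiltG pi0 c d γ)[fun x ↦ x]) Var[fun x ↦ x; tiltG pi0 c d γ] γ := by
  simp only [tiltG_eq_tilted_quadTilt hsupp]
  exact hasDerivAt_integral_tilted_mul_self (mem_interior_integrableExpSet_tilted hsupp _ γ)

lemma hasDerivAt_integral_sq_tiltG (c d γ : ℝ) :
    HasDerivAt (fun γ ↦ (tiltG pi0 c d γ)[fun x ↦ x ^ 2])
      ((tiltG pi0 c d γ)[fun x ↦ x * x ^ 2]
        - (tiltG pi0 c d γ)[fun x ↦ x] * (tiltG pi0 c d γ)[fun x ↦ x ^ 2]) γ := by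
  have : IsProbabilityMeasure (quadTilt pi0 (c * (d / 2))) :=
    isProbabilityMeasure_tilted (by simpa using integrable_exp_quadratic hsupp 0 (c * (d / 2)))
  simp only [tiltG_eq_tilted_quadTilt hsupp]
  exact hasDerivAt_integral_pow_tilted_mul (μ := quadTilt pi0 (c * (d / 2)))
    (mem_interior_integrableExpSet_tilted hsupp _ γ) 2

lemma variance_tiltG_pos (hnontriv : ∃ s : Set ℝ, MeasurableSet s ∧ 0 < pi0 s ∧ pi0 s < 1)
    (c d γ : ℝ) : 0 < Var[fun x ↦ x; tiltG pi0 c d γ] := by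
  rw [tiltG_eq_tilted hsupp]
  refine variance_pos_of_absolutelyContinuous
    (absolutelyContinuous_tilted (integrable_exp_quadratic hsupp _ _)) ?_
    (not_ae_eq_const_of_measure_pos_of_lt_one hnontriv)
  rw [← tilted_quadTilt hsupp]
  exact memLp_tilted_mul (mem_interior_integrableExpSet_tilted hsupp _ γ) 2

lemma klReal_tiltG (c d γ : ℝ) :
    klReal (tiltG pi0 c d γ) pi0 = γ * (tiltG pi0 c d γ)[fun x ↦ x]
      - c * (d / 2) * (tiltG pi0 c d γ)[fun x ↦ x ^ 2] - cpi pi0 c d γ := by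
  have hP : pi0.tilted (fun x ↦ γ * x - c * (d / 2) * x ^ 2) (Set.Icc (-1) 1)ᶜ = 0 :=
    tilted_absolutelyContinuous _ _ hsupp
  have hX : Integrable (fun x ↦ x) (pi0.tilted fun x ↦ γ * x - c * (d / 2) * x ^ 2) :=
    continuous_id.integrable_of_measure_compl_eq_zero isCompact_Icc hP
  have hX2 : Integrable (fun x ↦ x ^ 2) (pi0.tilted fun x ↦ γ * x - c * (d / 2) * x ^ 2) :=
    (continuous_pow 2).integrable_of_measure_compl_eq_zero isCompact_Icc hP
  rw [tiltG_eq_tilted hsupp, klReal_tilted_self (integrable_exp_quadratic hsupp _ _)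
    ((hX.const_mul γ).sub (hX2.const_mul _)), integral_sub (hX.const_mul γ) (hX2.const_mul _),
    integral_const_mul, integral_const_mul, cpi]

end

theorem deriv_kl_tilt_general (pi0 : Measure ℝ) [IsProbabilityMeasure pi0]
    (hsupp : pi0 (Set.Icc (-1 : ℝ) 1)ᶜ = 0)
    (hnontriv : ∃ s : Set ℝ, MeasurableSet s ∧ 0 < pi0 s ∧ pi0 s < 1)
    (c d : ℝ) (h : ℝ → ℝ)
    (U : Set ℝ) (hU : IsOpen U)
    (hinv : ∀ u ∈ U, deriv (cpi pi0 c d) (h u) = u) :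
    ∀ u ∈ U,
      deriv (fun v => klReal (tiltG pi0 c d (h v)) pi0) u
        = h u - c * (d / 2) *
            (((∫ x, x * x ^ 2 ∂tiltG pi0 c d (h u))
                - (∫ x, x ∂tiltG pi0 c d (h u)) * ∫ x, x ^ 2 ∂tiltG pi0 c d (h u))
              / variance id (tiltG pi0 c d (h u))) := by
  intro u hu
  rw [show (id : ℝ → ℝ) = fun x ↦ x from rfl]
  have hmean : ∀ v ∈ U, (tiltG pi0 c d (h v))[fun x ↦ x] = v := fun v hv ↦
    (hasDerivAt_cpi hsupp c d (h v)).deriv ▸ hinv v hv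
  have hvar := variance_tiltG_pos hsupp hnontriv c d
  have hh : HasDerivAt h (Var[fun x ↦ x; tiltG pi0 c d (h u)])⁻¹ u :=
    .of_leftInverse_of_strictMono hU
      (strictMono_of_hasDerivAt_pos (hasDerivAt_integral_id_tiltG hsupp c d) hvar) hmean hu
      (hasDerivAt_integral_id_tiltG hsupp c d _) (hvar _).ne'
  have hG : (fun v ↦ klReal (tiltG pi0 c d (h v)) pi0) =ᶠ[𝓝 u] fun v ↦
      h v * v - c * (d / 2) * (tiltG pi0 c d (h v))[fun x ↦ x ^ 2] - cpi pi0 c d (h v) := by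
    filter_upwards [hU.mem_nhds hu] with v hv
    rw [klReal_tiltG hsupp, hmean v hv]
  have hG_deriv : HasDerivAt (fun v ↦
      h v * v - c * (d / 2) * (tiltG pi0 c d (h v))[fun x ↦ x ^ 2] - cpi pi0 c d (h v)) _ u :=
    ((hh.mul (hasDerivAt_id' u)).sub
      (((hasDerivAt_integral_sq_tiltG hsupp c d _).comp u hh).const_mul _)).sub
      ((hasDerivAt_cpi hsupp c d _).comp u hh)
  rw [hG.deriv_eq, hG_deriv.deriv, hmean u hu]
  field_simp
  ring

/-- with `G(u,d) = D_KL(π_{(h(u,d),d)}‖π)` and `h` the inverse of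
`γ ↦ ∂_γ c_π(γ,d)` on an open set `U` in the interior of the mean range,
`∂G/∂u = h(u,d) - c·(d/2)·Cov(X,X²)/Var(X)` under the tilt at `h(u,d)`. -/
theorem deriv_kl_tilt (pi0 : Measure ℝ) [IsProbabilityMeasure pi0]
    (hsupp : pi0 (Set.Icc (-1 : ℝ) 1)ᶜ = 0)
    (hnontriv : ∃ s : Set ℝ, MeasurableSet s ∧ 0 < pi0 s ∧ pi0 s < 1)
    (c d : ℝ) (hd : 0 ≤ d) (h : ℝ → ℝ)
    (U : Set ℝ) (hU : IsOpen U)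
    (hinv : ∀ u ∈ U, deriv (cpi pi0 c d) (h u) = u) :
    ∀ u ∈ U,
      deriv (fun v => klReal (tiltG pi0 c d (h v)) pi0) u
        = h u - c * (d / 2) *
            (((∫ x, x * x ^ 2 ∂tiltG pi0 c d (h u))
                - (∫ x, x ∂tiltG pi0 c d (h u)) * ∫ x, x ^ 2 ∂tiltG pi0 c d (h u))
              / variance id (tiltG pi0 c d (h u))) :=
  deriv_kl_tilt_general pi0 hsupp hnontriv c d h U hU hinv
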